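/- Let m be an odd positive integer and a ∈ F_{2^m} with a ≠ 0 and tr(a) = 0. Then the map z ↦ a·z^2 + tr(a·z) is a bijection of F_{2^m}, and its inverse is the map z ↦ (z·a^{-1})^{2^{m-1}} + tr(a·z)·(a^{2^{m-1}})^{-1}. -/
import Mathlib

instance : Fact (Nat.Prime 2) := ⟨Nat.prime_two⟩

/-- The absolute trace `tr(x) = Σ_{i=0}^{m-1} x^(2^i)`, as an element of the field. -/
noncomputable def trF {m : ℕ} (x : GaloisField 2 m) : GaloisField 2 m :=
  ∑ i ∈ Finset.range m, x ^ (2 ^ i)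

namespace Stmt7Aux

variable {m : ℕ}

lemma pow_card' (hm : 0 < m) (x : GaloisField 2 m) : x ^ (2 ^ m) = x := by
  have h : Nat.card (GaloisField 2 m) = 2 ^ m := GaloisField.card 2 m hm.ne'
  have hfin : Finite (GaloisField 2 m) := Nat.finite_of_card_ne_zero (by rw [h]; positivity)
  haveI := Fintype.ofFinite (GaloisField 2 m)
  rw [← h, Nat.card_eq_fintype_card]
  exact FiniteField.pow_card x

lemma trF_add (x y : GaloisField 2 m) : trF (x + y) = trF x + trF y := by
  simp only [trF, ← Finset.sum_add_distrib]
  exact Finset.sum_congr rfl fun i _ => add_pow_char_pow _ _ 2 i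

lemma trF_zero : trF (0 : GaloisField 2 m) = 0 := by
  simp only [trF]
  apply Finset.sum_eq_zero
  intro i _
  exact zero_pow (by positivity)

lemma trF_sq (hm : 0 < m) (x : GaloisField 2 m) : trF (x ^ 2) = trF x := by
  have h1 : trF (x ^ 2) = ∑ i ∈ Finset.range m, x ^ (2 ^ (i + 1)) := by
    apply Finset.sum_congr rfl
    intro i _
    rw [← pow_mul, pow_succ']
  have h2 : ∑ i ∈ Finset.range (m + 1), x ^ (2 ^ i)
      = ∑ i ∈ Finset.range m, x ^ (2 ^ (i + 1)) + x ^ (2 ^ 0) :=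
    Finset.sum_range_succ' _ m
  have h3 : ∑ i ∈ Finset.range (m + 1), x ^ (2 ^ i) = trF x + x ^ (2 ^ m) :=
    Finset.sum_range_succ _ m
  have e0 : x ^ (2:ℕ) ^ 0 = x := by norm_num
  rw [e0] at h2
  rw [pow_card' hm] at h3
  have h4 : trF (x ^ 2) + x = trF x + x := by rw [h1, ← h2, h3]
  exact add_right_cancel h4

lemma trF_frob (hm : 0 < m) (x : GaloisField 2 m) (k : ℕ) :
    trF (x ^ (2 ^ k)) = trF x := by
  induction k with
  | zero => simp
  | succ k ih =>
    have : x ^ (2 ^ (k + 1)) = (x ^ (2 ^ k)) ^ 2 := by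
      rw [← pow_mul, pow_succ]
    rw [this, trF_sq hm, ih]

lemma trF_sq_self (x : GaloisField 2 m) : (trF x) ^ 2 = trF (x ^ 2) := by
  have h := map_sum (frobenius (GaloisField 2 m) 2)
      (fun i => x ^ (2 ^ i)) (Finset.range m)
  simp only [frobenius_def] at h
  simp only [trF, h]
  apply Finset.sum_congr rfl
  intro i _
  rw [← pow_mul, ← pow_mul, mul_comm]

lemma trF_idem (hm : 0 < m) (x : GaloisField 2 m) : trF x = 0 ∨ trF x = 1 := by
  have h : trF x * trF x = trF x * 1 := by
    have := trF_sq_self x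
    rw [trF_sq hm] at this
    rw [mul_one, ← sq, this]
  rcases eq_or_ne (trF x) 0 with h0 | h0
  · exact Or.inl h0
  · exact Or.inr (mul_left_cancel₀ h0 h)

end Stmt7Aux

open Stmt7Aux in
theorem stmt7 (m : ℕ) (hmpos : 0 < m) (hm : Odd m)
    (a : GaloisField 2 m) (ha : a ≠ 0) (htra : trF a = 0)
    (L : GaloisField 2 m → GaloisField 2 m) (hL : ∀ z, L z = a * z ^ 2 + trF (a * z))
    (I : GaloisField 2 m → GaloisField 2 m)
    (hI : ∀ z, I z = (z * a⁻¹) ^ (2 ^ (m - 1)) + trF (a * z) * (a ^ (2 ^ (m - 1)))⁻¹) :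
    Function.Bijective L ∧ (∀ z, L (I z) = z) ∧ (∀ z, I (L z) = z) := by
  set q : ℕ := 2 ^ (m - 1) with hq
  have h2q : q * 2 = 2 ^ m := by
    rw [hq, ← pow_succ]
    congr 1
    omega
  have hsq2 : ∀ x : GaloisField 2 m, (x ^ q) ^ 2 = x := by
    intro x
    rw [← pow_mul, h2q, pow_card' hmpos]
  have haq : a ^ q ≠ 0 := pow_ne_zero _ ha
  have haaq : a * (a ^ q)⁻¹ = a ^ q := by
    nth_rewrite 1 [← hsq2 a]
    rw [sq, mul_inv_cancel_right₀ haq]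
  -- trF (a * t) = 0 when t = trF (something)
  have htat : ∀ z : GaloisField 2 m, trF (a * trF (a * z)) = 0 := by
    intro z
    rcases trF_idem hmpos (a * z) with h | h <;> rw [h]
    · rw [mul_zero, trF_zero]
    · rw [mul_one, htra]
  have htq : ∀ z : GaloisField 2 m, (trF (a * z)) ^ q = trF (a * z) := by
    intro z
    rcases trF_idem hmpos (a * z) with h | h <;> rw [h]
    · exact zero_pow (by positivity)
    · exact one_pow _
  -- tr(a * L z) = tr(a z)
  have hAL : ∀ z, trF (a * L z) = trF (a * z) := by
    intro z
    rw [hL, mul_add, trF_add]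
    have h1 : a * (a * z ^ 2) = (a * z) ^ 2 := by ring
    rw [h1, trF_sq hmpos, htat, add_zero]
  -- I (L z) = z
  have hIL : ∀ z, I (L z) = z := by
    intro z
    rw [hI, hAL]
    have key : (L z * a⁻¹) ^ q = z + trF (a * z) * (a ^ q)⁻¹ := by
      rw [hL]
      have h1 : (a * z ^ 2 + trF (a * z)) * a⁻¹ = z ^ 2 + trF (a * z) * a⁻¹ := by
        rw [add_mul, mul_comm a (z ^ 2), mul_inv_cancel_right₀ ha]
      rw [h1, add_pow_char_pow _ _ 2 (m - 1), mul_pow, htq, inv_pow, ← pow_mul,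
        mul_comm 2 q, h2q, pow_card' hmpos]
    rw [key, add_assoc, CharTwo.add_self_eq_zero, add_zero]
  -- L (I z) = z
  have hLI : ∀ z, L (I z) = z := by
    intro z
    have hI2 : a * (I z) ^ 2 = z + trF (a * z) := by
      rw [hI, add_pow_char _ _ 2, hsq2, mul_pow, inv_pow, hsq2]
      have hs : (trF (a * z)) ^ 2 = trF (a * z) := by
        rw [trF_sq_self, trF_sq hmpos]
      rw [hs, mul_add, mul_comm z a⁻¹, ← mul_assoc, mul_inv_cancel₀ ha, one_mul,
        mul_comm (trF (a * z)) a⁻¹, ← mul_assoc, mul_inv_cancel₀ ha, one_mul]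
    have htrI : trF (a * I z) = trF (a * z) := by
      rw [hI, mul_add, trF_add]
      have ha2q : (a ^ 2) ^ q = a := by
        rw [← pow_mul, Nat.mul_comm 2 q, h2q, pow_card' hmpos]
      have h1 : a * (z * a⁻¹) ^ q = (a * z) ^ q := by
        calc a * (z * a⁻¹) ^ q = (a ^ 2) ^ q * (z * a⁻¹) ^ q := by rw [ha2q]
          _ = (a ^ 2 * (z * a⁻¹)) ^ q := (mul_pow _ _ _).symm
          _ = (a * z) ^ q := by
              rw [show a ^ 2 * (z * a⁻¹) = a * z * (a * a⁻¹) by ring,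
                mul_inv_cancel₀ ha, mul_one]
      have h2 : a * (trF (a * z) * (a ^ q)⁻¹) = trF (a * z) * a ^ q := by
        rw [mul_comm a, mul_assoc, mul_comm (a ^ q)⁻¹ a, haaq]
      rw [h1, h2, trF_frob hmpos]
      have h3 : trF (trF (a * z) * a ^ q) = 0 := by
        rcases trF_idem hmpos (a * z) with h | h <;> rw [h]
        · rw [zero_mul, trF_zero]
        · rw [one_mul, trF_frob hmpos, htra]
      rw [h3, add_zero]
    rw [hL, hI2, htrI, add_assoc, CharTwo.add_self_eq_zero, add_zero]
  exact ⟨Function.bijective_iff_has_inverse.mpr ⟨I, hIL, hLI⟩, hLI, hIL⟩
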